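/- Let H: ℝⁿ → ℝ be continuously differentiable, J ∈ ℝ^{n×n} skew-symmetric (J = −Jᵀ), and D ∈ ℝ^{n×n} symmetric positive semidefinite. Then L(x) := H(x) − H(0) satisfies L(0) = 0 and, for every x ∈ ℝⁿ, ((J−D)∇H(x))·∇L(x) + (∇L(x))ᵀ D ∇L(x) = 0; that is, L = H − H(0) is a classical solution of the controllability HJB equation f·∇L + ½(∇L)ᵀ(ggᵀ)∇L = 0 for the port-Hamiltonian system with drift f = (J−D)∇H and noise/control matrix satisfying ggᵀ = 2D. -/

import Mathlib

/-! Since `L` and `H` differ by a constant they have the same gradient `a = ∇H(x)`, and the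
equation becomes `((J - D) a) ⬝ a + a ⬝ D a = 0`: the skew-symmetric part contributes nothing
to the quadratic form, and the dissipation term `-(D a) ⬝ a` cancels `a ⬝ D a`. -/

open Matrix

/-- The continuous linear map `v ↦ a ⬝ᵥ v`, representing the differential of a scalar
function with gradient vector `a`. -/
noncomputable def dotCLM {n : ℕ} (a : Fin n → ℝ) : (Fin n → ℝ) →L[ℝ] ℝ :=
  LinearMap.toContinuousLinearMap
    { toFun := fun v => a ⬝ᵥ v
      map_add' := by intro v w; simp [dotProduct_add]
      map_smul' := by intro c v; simp [dotProduct_smul] }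

theorem dotCLM_injective {n : ℕ} : Function.Injective (dotCLM (n := n)) := by
  intro a b hab
  funext i
  simpa [dotCLM, dotProduct_single] using congrArg (fun φ => φ (Pi.single i 1)) hab

namespace Matrix

variable {ι R : Type*} [Fintype ι] [CommRing R]

theorem mulVec_dotProduct_self_eq_zero_of_transpose_eq_neg [IsAddTorsionFree R]
    {J : Matrix ι ι R} (hJ : Jᵀ = -J) (a : ι → R) : (J *ᵥ a) ⬝ᵥ a = 0 := by
  have h : (J *ᵥ a) ⬝ᵥ a = -((J *ᵥ a) ⬝ᵥ a) := by
    calc (J *ᵥ a) ⬝ᵥ a = (Jᵀ *ᵥ a) ⬝ᵥ a := by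
          rw [dotProduct_comm, dotProduct_mulVec, mulVec_transpose]
      _ = -((J *ᵥ a) ⬝ᵥ a) := by rw [hJ, neg_mulVec, neg_dotProduct]
  exact self_eq_neg.mp h

theorem sub_mulVec_dotProduct_self_add_dotProduct_mulVec_self [IsAddTorsionFree R]
    {J : Matrix ι ι R} (hJ : Jᵀ = -J) (D : Matrix ι ι R) (a : ι → R) :
    ((J - D) *ᵥ a) ⬝ᵥ a + a ⬝ᵥ (D *ᵥ a) = 0 := by
  rw [sub_mulVec, sub_dotProduct, mulVec_dotProduct_self_eq_zero_of_transpose_eq_neg hJ,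
    dotProduct_comm a]
  ring

end Matrix

theorem portHamiltonian_controllability_function_general
    (n : ℕ) (H : (Fin n → ℝ) → ℝ) (gradH : (Fin n → ℝ) → (Fin n → ℝ))
    -- `H` is continuously differentiable with gradient `gradH`:
    (hH : ∀ x, HasFDerivAt H (dotCLM (gradH x)) x)
    (J D : Matrix (Fin n) (Fin n) ℝ)
    (hJ : Jᵀ = -J)
    (L : (Fin n → ℝ) → ℝ) (hL : L = fun x => H x - H 0)
    (gradL : (Fin n → ℝ) → (Fin n → ℝ))
    -- `gradL` is the gradient of `L`:
    (hgradL : ∀ x, HasFDerivAt L (dotCLM (gradL x)) x) :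
    L 0 = 0 ∧
      ∀ x, ((J - D) *ᵥ gradH x) ⬝ᵥ gradL x + gradL x ⬝ᵥ (D *ᵥ gradL x) = 0 := by
  subst hL
  refine ⟨sub_self _, fun x => ?_⟩
  have hgrad : gradL x = gradH x :=
    dotCLM_injective <| (hgradL x).unique ((hH x).sub_const (H 0))
  rw [hgrad]
  exact sub_mulVec_dotProduct_self_add_dotProduct_mulVec_self hJ D (gradH x)

/-- For the port-Hamiltonian system with drift `f = (J-D)∇H` and `ggᵀ = 2D`
(`J` skew-symmetric, `D` symmetric positive semidefinite), the function
`L = H - H(0)` satisfies `L(0) = 0` and is a classical solution of the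
controllability HJB equation `f·∇L + ½(∇L)ᵀ(ggᵀ)∇L = 0`, i.e.
`((J-D)∇H)·∇L + (∇L)ᵀD∇L = 0` everywhere. -/
theorem portHamiltonian_controllability_function
    (n : ℕ) (H : (Fin n → ℝ) → ℝ) (gradH : (Fin n → ℝ) → (Fin n → ℝ))
    -- `H` is continuously differentiable with gradient `gradH`:
    (hH : ∀ x, HasFDerivAt H (dotCLM (gradH x)) x) (hHC1 : Continuous gradH)
    (J D : Matrix (Fin n) (Fin n) ℝ)
    (hJ : Jᵀ = -J) (hD : D.PosSemidef)
    (L : (Fin n → ℝ) → ℝ) (hL : L = fun x => H x - H 0)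
    (gradL : (Fin n → ℝ) → (Fin n → ℝ))
    -- `gradL` is the gradient of `L`:
    (hgradL : ∀ x, HasFDerivAt L (dotCLM (gradL x)) x) :
    L 0 = 0 ∧
      ∀ x, ((J - D) *ᵥ gradH x) ⬝ᵥ gradL x + gradL x ⬝ᵥ (D *ᵥ gradL x) = 0 :=
  portHamiltonian_controllability_function_general n H gradH hH J D hJ L hL gradL hgradL
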